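/- Let a, a* be normalized semisimple elements of L = sl₂(F) and define p ∈ F by ⟨a,a*⟩ = 1 − 2p. Then the following are equivalent: (i) p ≠ 0 and p ≠ 1; (ii) the elements a, a*, [a,a*] form a basis for the F-vector space L; (iii) the elements a, a* generate L as a Lie algebra. -/

import Mathlib

/-!
For traceless `2 × 2` matrices `xy + yx = 2⟨x, y⟩ • 1`, so normalized `a, a*` with
`s := ⟨a, a*⟩ = 1 - 2p` satisfy `a² = a*² = 1` and `aa* + a*a = 2s`. Hence
`[a, [a, a*]] = 4a* - 4sa` and `[a*, [a, a*]] = 4sa* - 4a`: the span of `a, a*, [a, a*]` is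
already the Lie algebra generated by `a, a*`, which makes (ii) and (iii) equivalent since
`dim L = 3`. The Gram matrix of `a, a*, [a, a*]` has determinant `-4(1 - s²)²`, and
`1 - s² = 4p(1 - p)`. If `p ∉ {0, 1}` this is nonzero, so the three elements are independent.
If `p ∈ {0, 1}`, then `sa - a*` is orthogonal to all three, so if they spanned `L` the
nondegeneracy of `⟨ , ⟩` would force `a* = sa`, hence `[a, a*] = 0`, impossible for a spanning
set of the `3`-dimensional `L`.
-/

open Matrix LieAlgebra.SpecialLinear

/-- An endomorphism of a vector space is diagonalizable when its eigenspaces span. -/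
def IsDiagonalizable {F M : Type*} [Field F] [AddCommGroup M] [Module F M]
    (f : Module.End F M) : Prop :=
  (⨆ μ : F, f.eigenspace μ) = ⊤

/-- The bilinear form `⟨y,z⟩ = tr(yz)/2` on `2×2` matrices (one eighth of the Killing form
of `sl₂`). -/
noncomputable def slForm {F : Type*} [Field F]
    (y z : Matrix (Fin 2) (Fin 2) F) : F :=
  Matrix.trace (y * z) / 2

section MatrixTrace

variable {F : Type*} [Field F]

theorem slForm_comm (x y : Matrix (Fin 2) (Fin 2) F) : slForm x y = slForm y x := by
  rw [slForm, slForm, trace_mul_comm]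

theorem slForm_lie_left (x y : Matrix (Fin 2) (Fin 2) F) : slForm x ⁅x, y⁆ = 0 := by
  rw [slForm, Ring.lie_def, mul_sub, trace_sub, trace_mul_comm x (y * x), mul_assoc,
    ← mul_assoc x x y, trace_mul_comm (x * x) y, sub_self, zero_div]

theorem slForm_lie_right (x y : Matrix (Fin 2) (Fin 2) F) : slForm y ⁅x, y⁆ = 0 := by
  rw [slForm, Ring.lie_def, mul_sub, trace_sub, ← mul_assoc y y x, trace_mul_comm (y * y) x,
    trace_mul_comm y (x * y), mul_assoc, sub_self, zero_div]

theorem mul_self_eq_slForm_smul_one (h2 : (2 : F) ≠ 0) {x : Matrix (Fin 2) (Fin 2) F}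
    (hx : trace x = 0) : x * x = slForm x x • 1 := by
  have hx11 : x 1 1 = -x 0 0 := by
    rw [trace_fin_two] at hx
    linear_combination hx
  ext i j
  fin_cases i <;> fin_cases j <;>
    simp only [Fin.zero_eta, Fin.mk_one, Fin.isValue, slForm, trace_fin_two, mul_apply,
      Fin.sum_univ_two, hx11, Matrix.smul_apply, one_apply_eq, one_apply_ne, ne_eq, zero_ne_one,
      one_ne_zero, not_false_eq_true, smul_eq_mul, mul_one, mul_zero] <;>
    field_simp <;> ring

theorem mul_add_mul_eq_slForm_smul_one (h2 : (2 : F) ≠ 0) {x y : Matrix (Fin 2) (Fin 2) F}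
    (hx : trace x = 0) (hy : trace y = 0) : x * y + y * x = (2 * slForm x y) • 1 := by
  have hxy : trace (x + y) = 0 := by rw [trace_add, hx, hy, add_zero]
  calc x * y + y * x = (x + y) * (x + y) - x * x - y * y := by noncomm_ring
    _ = (slForm (x + y) (x + y) - slForm x x - slForm y y) • 1 := by
      rw [mul_self_eq_slForm_smul_one h2 hxy, mul_self_eq_slForm_smul_one h2 hx,
        mul_self_eq_slForm_smul_one h2 hy, sub_smul, sub_smul]
    _ = (2 * slForm x y) • 1 := by
      simp only [slForm, add_mul, mul_add, trace_add, trace_mul_comm y x]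
      congr 1
      ring

theorem eq_zero_of_forall_trace_mul_eq_zero {n : Type*} [Fintype n] [DecidableEq n]
    {N : Matrix n n F} (hn : (Fintype.card n : F) ≠ 0) (hN : trace N = 0)
    (h : ∀ y, trace y = 0 → trace (N * y) = 0) : N = 0 := by
  rw [ext_iff_trace_mul_right]
  intro x
  have hy : trace (x - (trace x / Fintype.card n) • 1) = 0 := by
    rw [trace_sub, trace_smul, trace_one, smul_eq_mul, div_mul_cancel₀ _ hn, sub_self]
  have := h _ hy
  rw [mul_sub, trace_sub, mul_smul_comm, mul_one, trace_smul, hN, smul_zero, sub_zero] at this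
  rw [this, zero_mul, trace_zero]

end MatrixTrace

section Involutions

variable {F R : Type*} [CommRing F] [Ring R] [Algebra F R] {A B : R} {s : F}
  (hAB : A * B + B * A = (2 * s) • 1)
include hAB

theorem mul_mul_eq_smul_sub_left (hA : A * A = 1) : A * B * A = (2 * s) • A - B := by
  rw [mul_assoc, eq_sub_of_add_eq' hAB, mul_sub, mul_smul_comm, mul_one, ← mul_assoc, hA,
    one_mul]

theorem mul_mul_eq_smul_sub_right (hB : B * B = 1) : B * A * B = (2 * s) • B - A := by
  rw [eq_sub_of_add_eq' hAB, sub_mul, smul_mul_assoc, one_mul, mul_assoc, hB, mul_one]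

theorem lie_lie_eq_smul_sub_smul_left (hA : A * A = 1) :
    ⁅A, ⁅A, B⁆⁆ = (4 : F) • B - (4 * s) • A := by
  calc ⁅A, ⁅A, B⁆⁆ = A * A * B + B * (A * A) - (A * B * A + A * B * A) := by
        simp only [Ring.lie_def]; noncomm_ring
    _ = (4 : F) • B - (4 * s) • A := by
        rw [hA, mul_mul_eq_smul_sub_left hAB hA, one_mul, mul_one]; module

theorem lie_lie_eq_smul_sub_smul_right (hB : B * B = 1) :
    ⁅B, ⁅A, B⁆⁆ = (4 * s) • B - (4 : F) • A := by
  calc ⁅B, ⁅A, B⁆⁆ = (B * A * B + B * A * B) - B * B * A - A * (B * B) := by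
        simp only [Ring.lie_def]; noncomm_ring
    _ = (4 * s) • B - (4 : F) • A := by
        rw [hB, mul_mul_eq_smul_sub_right hAB hB, one_mul, mul_one]; module

theorem lie_mul_lie_eq_smul_one (hA : A * A = 1) (hB : B * B = 1) :
    ⁅A, B⁆ * ⁅A, B⁆ = (4 * s ^ 2 - 4) • 1 := by
  calc ⁅A, B⁆ * ⁅A, B⁆
        = A * B * A * B + B * A * B * A - A * (B * B) * A - B * (A * A) * B := by
        simp only [Ring.lie_def]; noncomm_ring
    _ = (2 * s) • (A * B + B * A) - (4 : F) • 1 := by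
        rw [mul_mul_eq_smul_sub_left hAB hA, mul_mul_eq_smul_sub_right hAB hB, hA,
          hB]
        simp only [sub_mul, smul_mul_assoc, mul_one, hA, hB]
        module
    _ = (4 * s ^ 2 - 4) • 1 := by rw [hAB]; module

end Involutions

namespace LieSubalgebra

open Submodule

variable {R L : Type*} [CommRing R] [LieRing L] [LieAlgebra R L]

theorem lie_mem_span_of_forall_lie_mem {s : Set L}
    (hs : ∀ x ∈ s, ∀ y ∈ s, ⁅x, y⁆ ∈ span R s) {x y : L} (hx : x ∈ span R s)
    (hy : y ∈ span R s) : ⁅x, y⁆ ∈ span R s := by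
  induction hx, hy using span_induction₂ with
  | mem_mem x y hx hy => exact hs x hx y hy
  | zero_left y hy => simp
  | zero_right x hx => simp
  | add_left x y z _ _ _ hx hy => simp [add_mem hx hy]
  | add_right x y z _ _ _ hx hy => simp [add_mem hx hy]
  | smul_left r x y _ _ h => simp [smul_mem _ r h]
  | smul_right r x y _ _ h => simp [smul_mem _ r h]

theorem coe_lieSpan_pair_eq_span {x y : L}
    (hx : ⁅x, ⁅x, y⁆⁆ ∈ span R (Set.range ![x, y, ⁅x, y⁆]))
    (hy : ⁅y, ⁅x, y⁆⁆ ∈ span R (Set.range ![x, y, ⁅x, y⁆])) :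
    (lieSpan R L {x, y} : Submodule R L) = span R (Set.range ![x, y, ⁅x, y⁆]) := by
  set S := span R (Set.range ![x, y, ⁅x, y⁆])
  have mem (i : Fin 3) : ![x, y, ⁅x, y⁆] i ∈ S := subset_span (Set.mem_range_self i)
  have hc : ⁅x, y⁆ ∈ S := mem 2
  have closed : ∀ u ∈ Set.range ![x, y, ⁅x, y⁆], ∀ v ∈ Set.range ![x, y, ⁅x, y⁆],
      ⁅u, v⁆ ∈ S := by
    rintro _ ⟨i, rfl⟩ _ ⟨j, rfl⟩
    fin_cases i <;> fin_cases j
    all_goals simp only [Fin.zero_eta, Fin.mk_one, Fin.reduceFinMk, Matrix.cons_val, lie_self,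
      ← lie_skew y x, ← lie_skew ⁅x, y⁆ x, ← lie_skew ⁅x, y⁆ y, neg_mem_iff, zero_mem, hx, hy,
      hc]
  apply le_antisymm
  · change _ ≤ ({ S with lie_mem' := lie_mem_span_of_forall_lie_mem closed } :
      LieSubalgebra R L)
    rw [lieSpan_le]
    rintro _ (rfl | rfl)
    exacts [mem 0, mem 1]
  · rw [span_le]
    rintro _ ⟨i, rfl⟩
    fin_cases i
    · exact subset_lieSpan (Set.mem_insert x _)
    · exact subset_lieSpan (Set.mem_insert_of_mem x rfl)
    · exact lie_mem _ (subset_lieSpan (Set.mem_insert x _))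
        (subset_lieSpan (Set.mem_insert_of_mem x rfl))

end LieSubalgebra

theorem LinearMap.BilinForm.linearIndependent_of_det_ne_zero {R M ι : Type*} [CommRing R]
    [IsDomain R] [AddCommGroup M] [Module R M] [Fintype ι] [DecidableEq ι]
    (B : LinearMap.BilinForm R M) {v : ι → M}
    (h : (Matrix.of fun i j => B (v i) (v j)).det ≠ 0) : LinearIndependent R v := by
  rw [Fintype.linearIndependent_iff]
  intro g hg
  refine congrFun (eq_zero_of_mulVec_eq_zero h ?_)
  ext i
  simpa [mulVec, dotProduct, mul_comm] using congrArg (B (v i)) hg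

section SlTwo

open Submodule

variable {F : Type*} [Field F]

variable (F) in
noncomputable def slBilinForm : LinearMap.BilinForm F (sl (Fin 2) F) :=
  LinearMap.mk₂ F (fun x y => slForm (x : Matrix (Fin 2) (Fin 2) F) y)
    (by intros; simp [slForm, add_mul, add_div])
    (by intros; simp [slForm, mul_div_assoc])
    (by intros; simp [slForm, mul_add, add_div])
    (by intros; simp [slForm, mul_div_assoc])

@[simp]
theorem slBilinForm_apply (x y : sl (Fin 2) F) : slBilinForm F x y = slForm x y := rfl

theorem slBilinForm_separatingLeft (h2 : (2 : F) ≠ 0) : (slBilinForm F).SeparatingLeft := by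
  refine fun x hx ↦ Subtype.ext <| eq_zero_of_forall_trace_mul_eq_zero (by simpa using h2) x.2
    fun y hy ↦ ?_
  simpa [slForm, h2] using hx ⟨y, hy⟩

theorem finrank_sl_two : Module.finrank F (sl (Fin 2) F) = 3 := by
  have h := (traceLinearMap (Fin 2) F F).finrank_range_add_finrank_ker
  rw [LinearMap.range_eq_top.2 trace_surjective, finrank_top, Module.finrank_matrix,
    Module.finrank_self, Fintype.card_fin] at h
  exact (by omega : Module.finrank F (LinearMap.ker (traceLinearMap (Fin 2) F F)) = 3)

theorem coe_mul_self_eq_one_of_slForm (h2 : (2 : F) ≠ 0) {x : sl (Fin 2) F}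
    (hx : slForm (x : Matrix (Fin 2) (Fin 2) F) x = 1) :
    (x : Matrix (Fin 2) (Fin 2) F) * x = 1 := by
  rw [mul_self_eq_slForm_smul_one h2 x.2, hx, one_smul]

variable (h2 : (2 : F) ≠ 0) {a b : sl (Fin 2) F} {s : F}
  (ha : slForm (a : Matrix (Fin 2) (Fin 2) F) a = 1)
  (hb : slForm (b : Matrix (Fin 2) (Fin 2) F) b = 1)
  (hab : slForm (a : Matrix (Fin 2) (Fin 2) F) b = s)
include h2 ha hb hab

theorem coe_lieSpan_eq_span_of_slForm :
    (LieSubalgebra.lieSpan F (sl (Fin 2) F) {a, b} : Submodule F (sl (Fin 2) F)) =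
      span F (Set.range ![a, b, ⁅a, b⁆]) := by
  have hAB := hab ▸ mul_add_mul_eq_slForm_smul_one h2 a.2 b.2
  have mem (i : Fin 3) : ![a, b, ⁅a, b⁆] i ∈ span F (Set.range ![a, b, ⁅a, b⁆]) :=
    subset_span (Set.mem_range_self i)
  apply LieSubalgebra.coe_lieSpan_pair_eq_span
  · have : ⁅a, ⁅a, b⁆⁆ = (4 : F) • b - (4 * s) • a :=
      Subtype.ext <| lie_lie_eq_smul_sub_smul_left hAB (coe_mul_self_eq_one_of_slForm h2 ha)
    rw [this]
    exact sub_mem (smul_mem _ _ (mem 1)) (smul_mem _ _ (mem 0))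
  · have : ⁅b, ⁅a, b⁆⁆ = (4 * s) • b - (4 : F) • a :=
      Subtype.ext <| lie_lie_eq_smul_sub_smul_right hAB (coe_mul_self_eq_one_of_slForm h2 hb)
    rw [this]
    exact sub_mem (smul_mem _ _ (mem 1)) (smul_mem _ _ (mem 0))

theorem linearIndependent_lie_triple_of_sq_ne_one (hs : s ^ 2 ≠ 1) :
    LinearIndependent F ![a, b, ⁅a, b⁆] := by
  have hcc : slForm ⁅(a : Matrix (Fin 2) (Fin 2) F), b⁆ ⁅(a : Matrix (Fin 2) (Fin 2) F), b⁆ =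
      4 * s ^ 2 - 4 := by
    rw [slForm, lie_mul_lie_eq_smul_one (hab ▸ mul_add_mul_eq_slForm_smul_one h2 a.2 b.2)
      (coe_mul_self_eq_one_of_slForm h2 ha) (coe_mul_self_eq_one_of_slForm h2 hb), trace_smul,
      trace_one]
    simp only [Fintype.card_fin, Nat.cast_ofNat, smul_eq_mul]
    field_simp
  apply (slBilinForm F).linearIndependent_of_det_ne_zero
  -- the Gram matrix is `!![1, s, 0; s, 1, 0; 0, 0, 4 * s ^ 2 - 4]`
  rw [det_fin_three]
  simp only [of_apply, cons_val, slBilinForm_apply, LieSubalgebra.coe_bracket, ha, hb, hab, hcc,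
    slForm_comm (b : Matrix (Fin 2) (Fin 2) F) a, slForm_lie_left, slForm_lie_right,
    slForm_comm ⁅(a : Matrix (Fin 2) (Fin 2) F), (b : Matrix (Fin 2) (Fin 2) F)⁆]
  have h1s : 1 - s ^ 2 ≠ 0 := sub_ne_zero.2 (Ne.symm hs)
  convert_to (2 * 2) * (1 - s ^ 2) ^ 2 * (-1 : F) ≠ 0 using 1
  · ring
  · simp [h2, h1s]

theorem sq_ne_one_of_linearIndependent_lie_triple (hli : LinearIndependent F ![a, b, ⁅a, b⁆]) :
    s ^ 2 ≠ 1 := by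
  intro hs
  have hspan := hli.span_eq_top_of_card_eq_finrank (by simp [finrank_sl_two])
  have horth : slBilinForm F (s • a - b) = 0 := by
    refine LinearMap.ext_on hspan ?_
    rintro _ ⟨i, rfl⟩
    fin_cases i <;>
      simp [slForm_comm (b : Matrix (Fin 2) (Fin 2) F) a, ha, hb, hab, ← sq, hs,
        slForm_lie_left, slForm_lie_right]
  have hb' : b = s • a :=
    (sub_eq_zero.1 (slBilinForm_separatingLeft h2 _ fun y => by rw [horth]; rfl)).symm
  exact hli.ne_zero 2 (by simp [hb'])

end SlTwo

theorem stmt6_general (F : Type*) [Field F] (hchar : (2 : F) ≠ 0)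
    (a as : sl (Fin 2) F)
    (hna : slForm (a : Matrix (Fin 2) (Fin 2) F) (a : Matrix (Fin 2) (Fin 2) F) = 1)
    (hnas : slForm (as : Matrix (Fin 2) (Fin 2) F) (as : Matrix (Fin 2) (Fin 2) F) = 1)
    (p : F)
    (hp : slForm (a : Matrix (Fin 2) (Fin 2) F) (as : Matrix (Fin 2) (Fin 2) F) = 1 - 2 * p) :
    List.TFAE
      [ p ≠ 0 ∧ p ≠ 1,
        LinearIndependent F ![a, as, ⁅a, as⁆] ∧
          Submodule.span F (Set.range ![a, as, ⁅a, as⁆]) = ⊤,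
        LieSubalgebra.lieSpan F (sl (Fin 2) F) {a, as} = ⊤ ] := by
  have hp01 : p ≠ 0 ∧ p ≠ 1 ↔ (1 - 2 * p) ^ 2 ≠ 1 := by
    rw [← sub_ne_zero (a := (1 - 2 * p) ^ 2),
      show (1 - 2 * p) ^ 2 - 1 = 2 * 2 * (p * (p - 1)) by ring]
    simp [hchar, sub_eq_zero]
  have hcard : Fintype.card (Fin 3) = Module.finrank F (sl (Fin 2) F) := by
    rw [finrank_sl_two, Fintype.card_fin]
  tfae_have 1 → 2 := fun h =>
    have hli := linearIndependent_lie_triple_of_sq_ne_one hchar hna hnas hp (hp01.1 h)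
    ⟨hli, hli.span_eq_top_of_card_eq_finrank hcard⟩
  tfae_have 2 → 1 := fun h =>
    hp01.2 (sq_ne_one_of_linearIndependent_lie_triple hchar hna hnas hp h.1)
  tfae_have 2 ↔ 3 := by
    rw [← LieSubalgebra.toSubmodule_eq_top, coe_lieSpan_eq_span_of_slForm hchar hna hnas hp]
    exact ⟨And.right, fun h =>
      ⟨linearIndependent_of_top_le_span_of_card_eq_finrank h.ge hcard, h⟩⟩
  tfae_finish

/-- Let `a, a*` be normalized semisimple elements of `L = sl₂(F)` and define `p` by
`⟨a,a*⟩ = 1 − 2p`.  The following are equivalent: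
(i) `p ≠ 0` and `p ≠ 1`;
(ii) `a, a*, [a,a*]` form a basis of the `F`-vector space `L`;
(iii) `a, a*` generate `L` as a Lie algebra. -/
theorem stmt6 (F : Type*) [Field F] [IsAlgClosed F] (hchar : (2 : F) ≠ 0)
    (a as : sl (Fin 2) F)
    (ha : IsDiagonalizable (LieAlgebra.ad F (sl (Fin 2) F) a))
    (has : IsDiagonalizable (LieAlgebra.ad F (sl (Fin 2) F) as))
    (hna : slForm (a : Matrix (Fin 2) (Fin 2) F) (a : Matrix (Fin 2) (Fin 2) F) = 1)
    (hnas : slForm (as : Matrix (Fin 2) (Fin 2) F) (as : Matrix (Fin 2) (Fin 2) F) = 1)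
    (p : F)
    (hp : slForm (a : Matrix (Fin 2) (Fin 2) F) (as : Matrix (Fin 2) (Fin 2) F) = 1 - 2 * p) :
    List.TFAE
      [ p ≠ 0 ∧ p ≠ 1,
        LinearIndependent F ![a, as, ⁅a, as⁆] ∧
          Submodule.span F (Set.range ![a, as, ⁅a, as⁆]) = ⊤,
        LieSubalgebra.lieSpan F (sl (Fin 2) F) {a, as} = ⊤ ] :=
  stmt6_general F hchar a as hna hnas p hp
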